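/- arXiv:0809.1688 — 6 statements merged into one kernel-verified Lean document; each statement's English description precedes it below -/
import Mathlib

section
/- Let p be a prime, r ≥ 1 an integer, n = p^r, and let q = p^e be a power of p with e ≥ 1, and moreover e ≥ 2 if p = 2. Let P be a Sylow p-subgroup of the symmetric group S_n. Then every subset Λ of X_n(q) that is invariant under P and generates X_n(q) as an abelian group has at least p^{2r−1} elements. -/
/-!
Label the `n = p ^ r` points by their base-`p` digit vectors in `(ZMod p) ^ r`. The triangular
permutations, which shift each digit by an amount depending only on the higher digits, form
Kaloujnine's iterated wreath product; it is a `p`-group, so after relabelling it lies in `P`.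

Count the elements of `Λ` having a coordinate that is nonzero mod `p`. Summing over the `p` points
of each bottom block maps `Λ` onto an invariant generating set one level up. Each of its elements
with a coordinate nonzero mod `p` has a second one (the coordinates sum to `0`); rotating the two
corresponding blocks of a preimage independently gives `p ^ 2` distinct such elements of `Λ`. At
depth one a generating set must contain a non-constant element with a coordinate nonzero mod `p`,
and its `p` rotations are distinct; for `p = 2` this needs `e ≥ 2`.
-/

open Equiv Finset

-- Digit vectors, lowest digit first: `Fin.cons x u` is point `x` of the bottom block `u`.
abbrev Leaf (p r : ℕ) := Fin r → ZMod p

def IsTriangular {p r : ℕ} (σ : Perm (Leaf p r)) : Prop :=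
  ∀ v w : Leaf p r, ∀ k : Fin r, (∀ j, k < j → v j = w j) → σ v k - v k = σ w k - w k

theorem Equiv.Perm.pow_apply_apply_eq {ι β : Type*} {σ : Perm (ι → β)} {j : ι}
    (h : ∀ v, σ v j = v j) (n : ℕ) (v : ι → β) : (σ ^ n) v j = v j := by
  induction n with
  | zero => rfl
  | succ n ih => rw [pow_succ', Perm.mul_apply, h, ih]

namespace IsTriangular

variable {p r : ℕ} {σ τ : Perm (Leaf p r)}

theorem one : IsTriangular (1 : Perm (Leaf p r)) := fun _ _ _ _ => by simp

theorem apply_eq_apply (hσ : IsTriangular σ) {v w : Leaf p r} {k : Fin r}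
    (h : ∀ j, k < j → v j = w j) (j : Fin r) (hj : k < j) : σ v j = σ w j := by
  have := hσ v w j fun i hi => h i (hj.trans hi)
  rwa [h j hj, sub_left_inj] at this

theorem mul (hσ : IsTriangular σ) (hτ : IsTriangular τ) : IsTriangular (σ * τ) := by
  intro v w k h
  have := hσ (τ v) (τ w) k (hτ.apply_eq_apply h)
  simp only [Perm.mul_apply]
  linear_combination this + hτ v w k h

theorem pow (hσ : IsTriangular σ) (n : ℕ) : IsTriangular (σ ^ n) := by
  induction n with
  | zero => exact one
  | succ n ih => rw [pow_succ]; exact ih.mul hσ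

theorem inv [NeZero p] (hσ : IsTriangular σ) : IsTriangular σ⁻¹ := by
  obtain ⟨n, hn⟩ := (isOfFinOrder_of_finite σ).mem_powers_iff_mem_zpowers.mpr
    (inv_mem (Subgroup.mem_zpowers σ))
  exact hn ▸ hσ.pow n

theorem pow_apply_of_fixed (hσ : IsTriangular σ) {k : Fin r}
    (hfix : ∀ v j, k < j → σ v j = v j) (n : ℕ) (v : Leaf p r) :
    (σ ^ n) v k = v k + n • (σ v k - v k) := by
  induction n with
  | zero => simp
  | succ n ih =>
    have := hσ ((σ ^ n) v) v k fun j hj => Perm.pow_apply_apply_eq (hfix · j hj) n v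
    rw [pow_succ', Perm.mul_apply, eq_add_of_sub_eq this, ih, succ_nsmul]
    abel

theorem pow_prime_pow_apply (hσ : IsTriangular σ) (m : ℕ) (v : Leaf p r) (j : Fin r)
    (hj : r ≤ j + m) : (σ ^ p ^ m) v j = v j := by
  induction m generalizing v j with
  | zero => omega
  | succ m ih =>
    rw [pow_succ, pow_mul]
    rcases hj.lt_or_eq with hj | hj
    · exact Perm.pow_apply_apply_eq (ih · j (by omega)) p v
    -- With the digits above `j` fixed, digit `j` moves by a constant step, so `p` steps fix it.
    · have hfix : ∀ w i, j < i → (σ ^ p ^ m) w i = w i := fun w i hi =>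
        ih w i (by simp only [Fin.lt_def] at hi; omega)
      simp [(hσ.pow _).pow_apply_of_fixed hfix]

theorem pow_prime_pow_eq_one (hσ : IsTriangular σ) : σ ^ p ^ r = 1 :=
  Perm.ext fun v => funext fun j => hσ.pow_prime_pow_apply r v j (by omega)

end IsTriangular

def triangular (p r : ℕ) [NeZero p] : Subgroup (Perm (Leaf p r)) where
  carrier := {σ | IsTriangular σ}
  mul_mem' := IsTriangular.mul
  one_mem' := IsTriangular.one
  inv_mem' := IsTriangular.inv

theorem isPGroup_triangular (p r : ℕ) [NeZero p] : IsPGroup p (triangular p r) :=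
  fun σ => ⟨r, Subtype.ext σ.2.pow_prime_pow_eq_one⟩

section Tree

variable {p r : ℕ}

def rotPerm (f : Leaf p r → ZMod p) : Perm (Leaf p (r + 1)) where
  toFun v := Fin.cons (v 0 + f (Fin.tail v)) (Fin.tail v)
  invFun v := Fin.cons (v 0 - f (Fin.tail v)) (Fin.tail v)
  left_inv v := by simp
  right_inv v := by simp

@[simp]
theorem rotPerm_cons (f : Leaf p r → ZMod p) (x : ZMod p) (u : Leaf p r) :
    rotPerm f (Fin.cons x u) = Fin.cons (x + f u) u := by
  simp [rotPerm]

def liftPerm (τ : Perm (Leaf p r)) : Perm (Leaf p (r + 1)) where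
  toFun v := Fin.cons (v 0) (τ (Fin.tail v))
  invFun v := Fin.cons (v 0) (τ⁻¹ (Fin.tail v))
  left_inv v := by simp
  right_inv v := by simp

@[simp]
theorem liftPerm_cons (τ : Perm (Leaf p r)) (x : ZMod p) (u : Leaf p r) :
    liftPerm τ (Fin.cons x u) = Fin.cons x (τ u) := by
  simp [liftPerm]

variable [NeZero p]

theorem rotPerm_mem_triangular (f : Leaf p r → ZMod p) : rotPerm f ∈ triangular p (r + 1) := by
  intro v w k h
  induction k using Fin.cases with
  | zero =>
    have : Fin.tail v = Fin.tail w := funext fun i => h i.succ i.succ_pos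
    simp [rotPerm, this]
  | succ k => simp [rotPerm, Fin.tail]

theorem liftPerm_mem_triangular {τ : Perm (Leaf p r)} (hτ : τ ∈ triangular p r) :
    liftPerm τ ∈ triangular p (r + 1) := by
  intro v w k h
  induction k using Fin.cases with
  | zero => simp [liftPerm]
  | succ k =>
    simpa [liftPerm, Fin.tail] using
      hτ (Fin.tail v) (Fin.tail w) k fun j hj => h j.succ (Fin.succ_lt_succ_iff.mpr hj)

end Tree

section ZeroSum

variable (ι A : Type*) [Fintype ι] [AddCommGroup A]

def zeroSum : AddSubgroup (ι → A) where
  carrier := {a | ∑ i, a i = 0}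
  add_mem' {a b} ha hb := by simp_all [Finset.sum_add_distrib]
  zero_mem' := by simp
  neg_mem' {a} ha := by simp_all

variable {ι A}

theorem mem_zeroSum {a : ι → A} : a ∈ zeroSum ι A ↔ ∑ i, a i = 0 := Iff.rfl

theorem map_funCongrLeft_zeroSum {κ : Type*} [Fintype κ] (e : ι ≃ κ) :
    (zeroSum κ A).map (LinearEquiv.funCongrLeft ℤ A e).toAddMonoidHom = zeroSum ι A := by
  ext a
  simp only [AddSubgroup.mem_map, mem_zeroSum]
  constructor
  · rintro ⟨b, hb, rfl⟩
    simpa [Equiv.sum_comp e b] using hb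
  · intro ha
    refine ⟨a ∘ e.symm, by simpa [Equiv.sum_comp e.symm a] using ha, ?_⟩
    ext i
    simp

theorem exists_ne_ne_zero_of_sum_eq_zero {f : ι → A} (hf : ∑ i, f i = 0) {i : ι}
    (hi : f i ≠ 0) : ∃ j, j ≠ i ∧ f j ≠ 0 := by
  classical
  rw [← Finset.add_sum_erase _ _ (Finset.mem_univ i)] at hf
  have : ∑ j ∈ univ.erase i, f j ≠ 0 := by
    rw [eq_neg_of_add_eq_zero_right hf]
    exact neg_ne_zero.mpr hi
  obtain ⟨j, hj, hfj⟩ := Finset.exists_ne_zero_of_sum_ne_zero this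
  exact ⟨j, Finset.ne_of_mem_erase hj, hfj⟩

end ZeroSum

section CoordKer

variable {F A B : Type*} [AddCommGroup A] [AddCommGroup B] [FunLike F A B]
  [AddMonoidHomClass F A B]

def coordKer (ρ : F) (ι : Type*) : AddSubgroup (ι → A) := ((ρ : A →+ B).compLeft ι).ker

variable {ρ : F} {ι : Type*}

theorem mem_coordKer {a : ι → A} : a ∈ coordKer ρ ι ↔ ∀ i, ρ (a i) = 0 := by
  simp [coordKer, funext_iff]

theorem comp_mem_coordKer_iff {a : ι → A} (σ : Perm ι) :
    a ∘ σ ∈ coordKer ρ ι ↔ a ∈ coordKer ρ ι := by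
  simp only [mem_coordKer, Function.comp_apply]
  exact σ.forall_congr_right (q := fun i => ρ (a i) = 0)

end CoordKer

section BlockSum

variable {p r : ℕ} [NeZero p] {A : Type*} [AddCommGroup A]

def blockSum : (Leaf p (r + 1) → A) →+ (Leaf p r → A) :=
  AddMonoidHom.mk' (fun a u => ∑ x, a (Fin.cons x u))
    fun a b => funext fun u => by simp [Finset.sum_add_distrib]

theorem blockSum_apply (a : Leaf p (r + 1) → A) (u : Leaf p r) :
    blockSum a u = ∑ x, a (Fin.cons x u) := rfl

theorem sum_blockSum (a : Leaf p (r + 1) → A) : ∑ u, blockSum a u = ∑ v, a v := by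
  rw [← Equiv.sum_comp (Fin.consEquiv fun _ => ZMod p) a, Fintype.sum_prod_type,
    Finset.sum_comm]
  rfl

theorem map_blockSum_zeroSum :
    (zeroSum (Leaf p (r + 1)) A).map blockSum = zeroSum (Leaf p r) A := by
  refine le_antisymm (AddSubgroup.map_le_iff_le_comap.mpr fun a ha => ?_) fun t ht => ?_
  · simpa [mem_zeroSum, sum_blockSum] using ha
  · let a : Leaf p (r + 1) → A := fun v => (Pi.single 0 (t (Fin.tail v)) : ZMod p → A) (v 0)
    have hat : blockSum a = t := funext fun u => by simp [a, blockSum_apply]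
    refine ⟨a, ?_, hat⟩
    rwa [SetLike.mem_coe, mem_zeroSum, ← sum_blockSum, hat]

theorem blockSum_comp_rotPerm (a : Leaf p (r + 1) → A) (f : Leaf p r → ZMod p) :
    blockSum (a ∘ rotPerm f) = blockSum a :=
  funext fun u => by
    simpa [blockSum_apply] using
      Fintype.sum_equiv (Equiv.addRight (f u)) _ (fun x => a (Fin.cons x u)) fun _ => rfl

theorem blockSum_comp_liftPerm (a : Leaf p (r + 1) → A) (τ : Perm (Leaf p r)) :
    blockSum (a ∘ liftPerm τ) = blockSum a ∘ τ :=
  funext fun u => by simp [blockSum_apply]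

variable {F B : Type*} [AddCommGroup B] [FunLike F A B] [AddMonoidHomClass F A B] {ρ : F}

theorem blockSum_mem_coordKer {a : Leaf p (r + 1) → A} (ha : a ∈ coordKer ρ _) :
    blockSum a ∈ coordKer ρ _ := by
  rw [mem_coordKer] at ha ⊢
  intro u
  simp [blockSum_apply, ha]

end BlockSum

section Rotation

variable {p r : ℕ} [Fact p.Prime]

theorem Function.Periodic.apply_eq_apply_of_ne_zero {β : Type*} {g : ZMod p → β} {d : ZMod p}
    (hg : Function.Periodic g d) (hd : d ≠ 0) (x y : ZMod p) : g x = g y := by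
  have := hg.nsmul ((y - x) / d).val x
  rw [nsmul_eq_mul, ZMod.natCast_zmod_val, div_mul_cancel₀ _ hd, add_sub_cancel] at this
  exact this.symm

theorem apply_cons_eq_of_comp_rotPerm_eq {β : Type*} {a : Leaf p (r + 1) → β}
    {f g : Leaf p r → ZMod p} (h : a ∘ rotPerm f = a ∘ rotPerm g) {u : Leaf p r}
    (hu : f u ≠ g u) (x y : ZMod p) : a (Fin.cons x u) = a (Fin.cons y u) := by
  refine Function.Periodic.apply_eq_apply_of_ne_zero (g := fun z => a (Fin.cons z u))
    (fun z => ?_) (sub_ne_zero.mpr hu.symm) x y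
  have := congrFun h (Fin.cons (z - f u) u)
  simp only [Function.comp_apply, rotPerm_cons, sub_add_cancel] at this
  show a (Fin.cons (z + (g u - f u)) u) = a (Fin.cons z u)
  rw [this, ← add_sub_assoc, sub_add_eq_add_sub]

variable {F A : Type*} [AddCommGroup A] [FunLike F A (ZMod p)] [AddMonoidHomClass F A (ZMod p)]
  {ρ : F}

theorem eq_of_comp_rotPerm_eq {a : Leaf p (r + 1) → A} {f g : Leaf p r → ZMod p}
    {u : Leaf p r} (hu : ρ (blockSum a u) ≠ 0) (h : a ∘ rotPerm f = a ∘ rotPerm g) :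
    f u = g u := by
  by_contra hne
  refine hu ?_
  rw [blockSum_apply,
    Finset.sum_congr rfl fun x _ => apply_cons_eq_of_comp_rotPerm_eq h hne x 0, sum_const,
    card_univ, ZMod.card, map_nsmul, nsmul_eq_mul, ZMod.natCast_self, zero_mul]

theorem injective_comp_rotPerm_single_add_single {a : Leaf p (r + 1) → A} {u₁ u₂ : Leaf p r}
    (hne : u₁ ≠ u₂) (h₁ : ρ (blockSum a u₁) ≠ 0) (h₂ : ρ (blockSum a u₂) ≠ 0) :
    Function.Injective fun ij : ZMod p × ZMod p =>
      a ∘ rotPerm (Pi.single u₁ ij.1 + Pi.single u₂ ij.2) := by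
  intro ij kl h
  have e₁ := eq_of_comp_rotPerm_eq h₁ h
  have e₂ := eq_of_comp_rotPerm_eq h₂ h
  simp only [Pi.add_apply, Pi.single_eq_same, Pi.single_eq_of_ne hne,
    Pi.single_eq_of_ne hne.symm, add_zero, zero_add] at e₁ e₂
  exact Prod.ext e₁ e₂

theorem sq_mul_ncard_image_blockSum_diff_le [Finite A] {S : Set (Leaf p (r + 1) → A)}
    (hS : S ⊆ zeroSum (Leaf p (r + 1)) A) (hrot : ∀ f, ∀ a ∈ S, a ∘ rotPerm f ∈ S) :
    p ^ 2 * (blockSum '' S \ coordKer ρ (Leaf p r) : Set _).ncard ≤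
      (S \ coordKer ρ (Leaf p (r + 1)) : Set _).ncard := by
  have hlift : ∀ t : ↥(blockSum '' S \ coordKer ρ (Leaf p r) : Set _),
      ∃ a ∈ S, blockSum a = t.1 ∧ ∃ u₁ u₂, u₁ ≠ u₂ ∧
        ρ (blockSum a u₁) ≠ 0 ∧ ρ (blockSum a u₂) ≠ 0 := by
    rintro ⟨_, ⟨a, haS, rfl⟩, ht⟩
    obtain ⟨u₁, hu₁⟩ : ∃ u, ρ (blockSum a u) ≠ 0 := by simpa [mem_coordKer] using ht
    have hsum : ∑ u, ρ (blockSum a u) = 0 := by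
      rw [← map_sum, sum_blockSum, mem_zeroSum.mp (hS haS), map_zero]
    obtain ⟨u₂, hne, hu₂⟩ := exists_ne_ne_zero_of_sum_eq_zero hsum hu₁
    exact ⟨a, haS, rfl, u₁, u₂, hne.symm, hu₁, hu₂⟩
  choose a haS hat u₁ u₂ hne h₁ h₂ using hlift
  let G : ↥(blockSum '' S \ coordKer ρ (Leaf p r) : Set _) × ZMod p × ZMod p →
      ↥(S \ coordKer ρ (Leaf p (r + 1)) : Set _) :=
    fun x => ⟨a x.1 ∘ rotPerm (Pi.single (u₁ x.1) x.2.1 + Pi.single (u₂ x.1) x.2.2),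
      hrot _ _ (haS _), fun h => x.1.2.2 <| by
        simpa [blockSum_comp_rotPerm, hat] using blockSum_mem_coordKer h⟩
  have hG : G.Injective := by
    rintro ⟨t, ij⟩ ⟨t', kl⟩ h
    have htt : t = t' := Subtype.ext <| by
      simpa [G, blockSum_comp_rotPerm, hat] using congrArg (blockSum ∘ Subtype.val) h
    subst htt
    exact Prod.ext rfl <|
      injective_comp_rotPerm_single_add_single (hne t) (h₁ t) (h₂ t) (congrArg Subtype.val h)
  simpa [Nat.card_coe_set_eq, Nat.card_zmod, mul_comm, sq] using
    Nat.card_le_card_of_injective G hG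

end Rotation

section Base

variable {p e : ℕ} [Fact p.Prime]

theorem ZMod.map_eq_zero_of_mul_eq_zero (ρ : ZMod (p ^ e) →+* ZMod p) (he : 2 ≤ e)
    {k : ZMod (p ^ e)} (hk : (p : ZMod (p ^ e)) * k = 0) : ρ k = 0 := by
  rw [← ZMod.natCast_zmod_val k, ← Nat.cast_mul, ZMod.natCast_eq_zero_iff] at hk
  have := (pow_dvd_pow p he).trans hk
  rw [pow_two, Nat.mul_dvd_mul_iff_left (Fact.out : p.Prime).pos] at this
  rwa [← ZMod.natCast_zmod_val k, map_natCast, ZMod.natCast_eq_zero_iff]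

theorem exists_mem_notMem_coordKer_apply_ne (ρ : ZMod (p ^ e) →+* ZMod p)
    (he2 : p = 2 → 2 ≤ e) {S : Set (Leaf p 1 → ZMod (p ^ e))}
    (hS : AddSubgroup.closure S = zeroSum _ _) :
    ∃ a ∈ S, a ∉ coordKer ρ (Leaf p 1) ∧ ∃ v w, a v ≠ a w := by
  by_contra! hconst
  have hv : (0 : Leaf p 1) ≠ 1 := fun h => zero_ne_one (congrFun h 0)
  let m : Leaf p 1 → ZMod (p ^ e) := Pi.single 0 1 - Pi.single 1 1
  have hm : m ∈ AddSubgroup.closure S := by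
    rw [hS, mem_zeroSum]
    simp [m, Finset.sum_sub_distrib]
  obtain ⟨H, hSH, hmH⟩ :
      ∃ H : AddSubgroup (Leaf p 1 → ZMod (p ^ e)), S ⊆ H ∧ m ∉ H := by
    by_cases hp2 : p = 2
    -- For `p = 2` a constant `k` with zero sum has `2 * k = 0`, hence `k ≡ 0 (mod 2)` as `e ≥ 2`.
    · refine ⟨coordKer ρ (Leaf p 1), fun a ha => ?_, fun h => ?_⟩
      · by_contra hD
        have hsum := mem_zeroSum.mp (hS ▸ AddSubgroup.subset_closure ha)
        rw [Finset.sum_congr rfl fun w _ => hconst a ha hD w 0, sum_const, card_univ] at hsum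
        refine hD (mem_coordKer.mpr fun v => ?_)
        rw [hconst a ha hD v 0]
        refine ZMod.map_eq_zero_of_mul_eq_zero ρ (he2 hp2) ?_
        simpa [ZMod.card, nsmul_eq_mul] using hsum
      · simpa [m, hv] using mem_coordKer.mp h 0
    -- For odd `p`, `a ↦ ρ (a 0) - ρ (a 1)` vanishes on constants and `coordKer ρ`, not on `m`.
    · let ψ : (Leaf p 1 → ZMod (p ^ e)) →+ ZMod p :=
        (ρ : ZMod (p ^ e) →+ ZMod p).comp (Pi.evalAddMonoidHom _ 0) -
          (ρ : ZMod (p ^ e) →+ ZMod p).comp (Pi.evalAddMonoidHom _ 1)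
      refine ⟨ψ.ker, fun a ha => ?_, fun h => ?_⟩
      · by_cases hD : a ∈ coordKer ρ (Leaf p 1)
        · simp [ψ, mem_coordKer.mp hD 0, mem_coordKer.mp hD 1]
        · simp [ψ, hconst a ha hD 0 1]
      · have h2 : ((2 : ℕ) : ZMod p) = 0 := by
          simpa [ψ, m, hv, hv.symm, one_add_one_eq_two] using h
        rw [ZMod.natCast_eq_zero_iff, Nat.prime_dvd_prime_iff_eq Fact.out Nat.prime_two] at h2
        exact hp2 h2
  exact hmH ((AddSubgroup.closure_le H).mpr hSH hm)

theorem le_ncard_diff_coordKer_one (ρ : ZMod (p ^ e) →+* ZMod p) (he2 : p = 2 → 2 ≤ e)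
    {S : Set (Leaf p 1 → ZMod (p ^ e))} (hS : AddSubgroup.closure S = zeroSum _ _)
    (hrot : ∀ f, ∀ a ∈ S, a ∘ rotPerm f ∈ S) :
    p ≤ (S \ coordKer ρ (Leaf p 1) : Set _).ncard := by
  obtain ⟨a, haS, haD, v, w, hvw⟩ := exists_mem_notMem_coordKer_apply_ne ρ he2 hS
  let G : ZMod p → ↥(S \ coordKer ρ (Leaf p 1) : Set _) :=
    fun i => ⟨a ∘ rotPerm fun _ => i, hrot _ _ haS,
      fun h => haD ((comp_mem_coordKer_iff _).mp h)⟩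
  have hG : G.Injective := fun i j h => by
    by_contra hij
    refine hvw ?_
    rw [← Fin.cons_self_tail v, ← Fin.cons_self_tail w,
      Subsingleton.elim (Fin.tail w) (Fin.tail v)]
    exact apply_cons_eq_of_comp_rotPerm_eq (congrArg Subtype.val h) hij _ _
  simpa [Nat.card_coe_set_eq, Nat.card_zmod] using Nat.card_le_card_of_injective G hG

theorem pow_le_ncard_diff_coordKer (ρ : ZMod (p ^ e) →+* ZMod p) (he2 : p = 2 → 2 ≤ e)
    {r : ℕ} (hr : 1 ≤ r) {S : Set (Leaf p r → ZMod (p ^ e))}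
    (hS : AddSubgroup.closure S = zeroSum _ _)
    (hinv : ∀ σ ∈ triangular p r, ∀ a ∈ S, a ∘ σ ∈ S) :
    p ^ (2 * r - 1) ≤ (S \ coordKer ρ (Leaf p r) : Set _).ncard := by
  induction r, hr using Nat.le_induction with
  | base =>
    simpa using le_ncard_diff_coordKer_one ρ he2 hS fun f => hinv _ (rotPerm_mem_triangular f)
  | succ r hr ih =>
    have hT : AddSubgroup.closure (blockSum '' S) = zeroSum _ _ := by
      rw [← AddMonoidHom.map_closure, hS, map_blockSum_zeroSum]
    have hTinv : ∀ τ ∈ triangular p r, ∀ t ∈ blockSum '' S,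
        t ∘ τ ∈ blockSum '' S := by
      rintro τ hτ _ ⟨a, ha, rfl⟩
      exact ⟨a ∘ liftPerm τ, hinv _ (liftPerm_mem_triangular hτ) a ha,
        blockSum_comp_liftPerm a τ⟩
    calc p ^ (2 * (r + 1) - 1) = p ^ 2 * p ^ (2 * r - 1) := by rw [← pow_add]; congr 1; omega
      _ ≤ p ^ 2 * (blockSum '' S \ coordKer ρ (Leaf p r) : Set _).ncard :=
        Nat.mul_le_mul_left _ (ih hT hTinv)
      _ ≤ _ := sq_mul_ncard_image_blockSum_diff_le (hS ▸ AddSubgroup.subset_closure)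
        fun f => hinv _ (rotPerm_mem_triangular f)

end Base

theorem exists_equiv_permCongr_mem_sylow {α β : Type*} [Finite β] {p : ℕ} [Fact p.Prime]
    {H : Subgroup (Perm α)} (hH : IsPGroup p H) (P : Sylow p (Perm β)) (e₀ : α ≃ β) :
    ∃ e : α ≃ β, ∀ σ ∈ H, e.permCongr σ ∈ P := by
  obtain ⟨Q, hQ⟩ := (hH.map (permCongrHom e₀).toMonoidHom).exists_le_sylow
  obtain ⟨g, rfl⟩ := MulAction.exists_smul_eq (Perm β) Q P
  refine ⟨e₀.trans g, fun σ hσ => ?_⟩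
  change _ ∈ ((g • Q : Sylow p (Perm β)) : Subgroup (Perm β))
  rw [Sylow.coe_subgroup_smul]
  convert Subgroup.smul_mem_pointwise_smul _ (MulAut.conj g) _ (hQ ⟨σ, hσ, rfl⟩) using 1
  ext
  simp [Equiv.permCongr_apply]

theorem stmt_0_general (p r e n q : ℕ) (hp : p.Prime) (hr : 1 ≤ r) (he : 1 ≤ e)
    (he2 : p = 2 → 2 ≤ e) (hn : n = p ^ r) (hq : q = p ^ e)
    (P : Sylow p (Equiv.Perm (Fin n)))
    (Λ : Set (Fin n → ZMod q))
    (hΛinv : ∀ σ ∈ (P : Subgroup (Equiv.Perm (Fin n))),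
      (fun a : Fin n → ZMod q => a ∘ ⇑σ⁻¹) '' Λ = Λ)
    (hΛgen : (AddSubgroup.closure Λ : Set (Fin n → ZMod q)) =
      {a : Fin n → ZMod q | ∑ i, a i = 0}) :
    p ^ (2 * r - 1) ≤ Λ.ncard := by
  subst hn hq
  have := Fact.mk hp
  obtain ⟨φ, hφ⟩ := exists_equiv_permCongr_mem_sylow (isPGroup_triangular p r) P
    (Fintype.equivFinOfCardEq (by simp [ZMod.card]))
  let Φ := (LinearEquiv.funCongrLeft ℤ (ZMod (p ^ e)) φ).toAddMonoidHom
  have hS : AddSubgroup.closure (Φ '' Λ) = zeroSum _ _ := by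
    rw [← AddMonoidHom.map_closure, show AddSubgroup.closure Λ = zeroSum _ _ from
      SetLike.coe_injective hΛgen, map_funCongrLeft_zeroSum]
  have hinv : ∀ σ ∈ triangular p r, ∀ a ∈ Φ '' Λ, a ∘ σ ∈ Φ '' Λ := by
    rintro σ hσ _ ⟨a, ha, rfl⟩
    refine ⟨a ∘ φ.permCongr σ, ?_, by ext; simp [Φ, Equiv.permCongr_apply]⟩
    rw [← hΛinv _ (inv_mem (hφ σ hσ))]
    exact ⟨a, ha, by simp⟩
  let ρ := ZMod.castHom (dvd_pow_self p (Nat.one_le_iff_ne_zero.mp he)) (ZMod p)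
  calc p ^ (2 * r - 1) ≤ (Φ '' Λ \ coordKer ρ (Leaf p r) : Set _).ncard :=
        pow_le_ncard_diff_coordKer ρ he2 hr hS hinv
    _ ≤ (Φ '' Λ).ncard := Set.ncard_le_ncard Set.sdiff_subset
    _ = Λ.ncard := Set.ncard_image_of_injective _ (LinearEquiv.injective _)

/-- Let `p` be a prime, `r ≥ 1`, `n = p^r`, and `q = p^e` with `e ≥ 1`
(and `e ≥ 2` if `p = 2`).  Let `P` be a Sylow `p`-subgroup of `S_n`.  Every subset
`Λ` of `X_n(q) = {a ∈ (ℤ/qℤ)^n : ∑ aᵢ = 0}` that is invariant under the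
coordinate-permutation action of `P` and generates `X_n(q)` as an abelian group
has at least `p^(2r-1)` elements. -/
theorem stmt_0 (p r e n q : ℕ) (hp : p.Prime) (hr : 1 ≤ r) (he : 1 ≤ e)
    (he2 : p = 2 → 2 ≤ e) (hn : n = p ^ r) (hq : q = p ^ e)
    (P : Sylow p (Equiv.Perm (Fin n)))
    (Λ : Set (Fin n → ZMod q))
    (hΛsub : ∀ a ∈ Λ, ∑ i, a i = 0)
    (hΛinv : ∀ σ ∈ (P : Subgroup (Equiv.Perm (Fin n))),
      (fun a : Fin n → ZMod q => a ∘ ⇑σ⁻¹) '' Λ = Λ)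
    (hΛgen : (AddSubgroup.closure Λ : Set (Fin n → ZMod q)) =
      {a : Fin n → ZMod q | ∑ i, a i = 0}) :
    p ^ (2 * r - 1) ≤ Λ.ncard :=
  stmt_0_general p r e n q hp hr he he2 hn hq P Λ hΛinv hΛgen
end

section
/- Let D be a finite abelian group of exponent m, F a finite group acting on D by automorphisms, and G = D ⋊ F. Let k be a field whose characteristic does not divide m and which contains a primitive m-th root of unity. If G admits a faithful k-linear representation on a finite-dimensional k-vector space V, then there exists an F-invariant subset Λ of the character group X(D) = Hom(D, kˣ), of cardinality at most dim_k V, which generates X(D) as an abelian group. In particular, if every F-invariant generating subset of X(D) has at least d elements, then every faithful finite-dimensional k-linear representation of G has dimension at least d. -/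
/-!
Restricted to `D`, a representation of `D ⋊ F` is a commuting family of operators killed by
`X ^ m - 1`, which is separable and splits over `k`; hence `V` is the direct sum of the weight
spaces `V_χ`, `χ ∈ X(D)`. The weights that occur are at most `dim V` in number, since the weight
spaces are independent, and they form an `F`-invariant set because `ρ f` maps `V_χ` into
`V_{f • χ}`. An element of `D` killed by every occurring weight acts trivially on `V`, hence is
trivial by faithfulness; by duality for finite abelian groups, characters with trivial common
kernel generate `X(D)`.
-/

open Polynomial

namespace Module.End

variable {k V : Type*} [Field k] [AddCommGroup V] [Module k V]

lemma ker_aeval_prod_X_sub_C_le_iSup_eigenspace (f : End k V) (s : Finset k) :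
    LinearMap.ker (aeval f (∏ a ∈ s, (X - C a))) ≤ ⨆ a ∈ s, f.eigenspace a := by
  classical
  induction s using Finset.induction_on with
  | empty => simp [one_eq_id]
  | insert a s ha ih =>
    have hcop : IsCoprime (X - C a) (∏ b ∈ s, (X - C b)) :=
      IsCoprime.prod_right fun b hb ↦
        isCoprime_X_sub_C_of_isUnit_sub
          (sub_ne_zero.mpr (ne_of_mem_of_not_mem hb ha).symm).isUnit
    rw [Finset.prod_insert ha, ← sup_ker_aeval_eq_ker_aeval_mul_of_coprime f hcop,
      Finset.iSup_insert, eigenspace_def, map_sub, aeval_X, aeval_C,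
      Algebra.algebraMap_eq_smul_one]
    exact sup_le_sup_left ih _

variable {f : End k V} {m : ℕ} [NeZero m] {ζ : k}

lemma iSup_eigenspace_eq_top_of_pow_eq_one (hζ : IsPrimitiveRoot ζ m) (hf : f ^ m = 1) :
    ⨆ μ, f.eigenspace μ = ⊤ := by
  have hker : LinearMap.ker (aeval f (X ^ m - 1 : k[X])) = ⊤ := by simp [hf]
  rw [eq_top_iff, ← hker, X_pow_sub_one_eq_prod (NeZero.pos m) hζ]
  exact (ker_aeval_prod_X_sub_C_le_iSup_eigenspace f _).trans (iSup₂_le_iSup _ _)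

lemma maxGenEigenspace_eq_eigenspace_of_pow_eq_one (hζ : IsPrimitiveRoot ζ m) (hf : f ^ m = 1)
    (μ : k) : f.maxGenEigenspace μ = f.eigenspace μ := by
  have := hζ.neZero'
  have hsep : (X ^ m - C 1 : k[X]).Separable := separable_X_pow_sub_C 1 (NeZero.ne _) one_ne_zero
  refine (isSemisimple_of_squarefree_aeval_eq_zero hsep.squarefree ?_).isFinitelySemisimple
    |>.maxGenEigenspace_eq_eigenspace μ
  simp [hf]

lemma iSup_maxGenEigenspace_eq_top_of_pow_eq_one (hζ : IsPrimitiveRoot ζ m) (hf : f ^ m = 1) :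
    ⨆ μ, f.maxGenEigenspace μ = ⊤ := by
  simp only [maxGenEigenspace_eq_eigenspace_of_pow_eq_one hζ hf,
    iSup_eigenspace_eq_top_of_pow_eq_one hζ hf]

end Module.End

namespace Representation

variable {k V D : Type*} [Field k] [AddCommGroup V] [Module k V]

section Monoid

variable [Monoid D] (π : Representation k D V)

def weightSpace (χ : D →* kˣ) : Submodule k V := ⨅ d, Module.End.eigenspace (π d) (χ d)

def weights : Set (D →* kˣ) := {χ | π.weightSpace χ ≠ ⊥}

lemma mem_weightSpace_iff {χ : D →* kˣ} {v : V} :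
    v ∈ π.weightSpace χ ↔ ∀ d, π d v = (χ d : k) • v := by
  simp [weightSpace]

end Monoid

section Group

variable [Group D] (π : Representation k D V)

lemma exists_eq_weightSpace_of_iInf_eigenspace_ne_bot {c : D → k}
    (hc : ⨅ d, Module.End.eigenspace (π d) (c d) ≠ ⊥) :
    ∃ χ : D →* kˣ, π.weightSpace χ = ⨅ d, Module.End.eigenspace (π d) (c d) := by
  obtain ⟨v, hv, hv0⟩ := Submodule.exists_mem_ne_zero_of_ne_bot hc
  have hv (d : D) : π d v = c d • v :=
    Module.End.mem_eigenspace_iff.mp ((Submodule.mem_iInf _).mp hv d)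
  have hsmul := smul_left_injective k hv0
  let c' : D →* k :=
    { toFun := c
      map_one' := hsmul (by simp [← hv])
      map_mul' a b := hsmul <| show c (a * b) • v = (c a * c b) • v by
        rw [← hv, map_mul, Module.End.mul_apply, hv, map_smul, hv, smul_smul, mul_comm] }
  exact ⟨c'.toHomUnits, rfl⟩

end Group

section CommGroup

variable [CommGroup D] (π : Representation k D V)

lemma iSupIndep_weightSpace : iSupIndep π.weightSpace := by
  have hindep := Module.End.independent_iInf_maxGenEigenspace_of_forall_mapsTo (fun d ↦ π d)
    fun a b μ ↦ Module.End.mapsTo_maxGenEigenspace_of_comm ((Commute.all b a).map π) μ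
  have hle : (fun c : D → k ↦ ⨅ d, Module.End.eigenspace (π d) (c d)) ≤
      fun c ↦ ⨅ d, Module.End.maxGenEigenspace (π d) (c d) :=
    fun c ↦ iInf_mono fun d ↦ Module.End.eigenspace_le_maxGenEigenspace
  have hinj : Function.Injective fun (χ : D →* kˣ) (d : D) ↦ (χ d : k) :=
    fun χ ψ h ↦ MonoidHom.ext fun d ↦ Units.ext (congrFun h d)
  exact (hindep.mono hle).comp hinj

lemma ncard_weights_le_finrank [FiniteDimensional k V] :
    π.weights.ncard ≤ Module.finrank k V := by
  have := π.iSupIndep_weightSpace.fintypeNeBotOfFiniteDimensional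
  calc π.weights.ncard = Nat.card {χ // π.weightSpace χ ≠ ⊥} := (Nat.card_coe_set_eq _).symm
    _ = Fintype.card {χ // π.weightSpace χ ≠ ⊥} := Nat.card_eq_fintype_card
    _ ≤ Module.finrank k V := π.iSupIndep_weightSpace.subtype_ne_bot_le_finrank

lemma iSup_weightSpace_eq_top [FiniteDimensional k V] {m : ℕ} [NeZero m] {ζ : k}
    (hζ : IsPrimitiveRoot ζ m) (hπ : ∀ d, π d ^ m = 1) : ⨆ χ, π.weightSpace χ = ⊤ := by
  have hspan :=
    Module.End.iSup_iInf_maxGenEigenspace_eq_top_of_iSup_maxGenEigenspace_eq_top_of_commute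
    (fun d ↦ π d) (fun a b _ ↦ (Commute.all a b).map π)
    fun d ↦ Module.End.iSup_maxGenEigenspace_eq_top_of_pow_eq_one hζ (hπ d)
  simp only [Module.End.maxGenEigenspace_eq_eigenspace_of_pow_eq_one hζ (hπ _)] at hspan
  refine eq_top_iff.mpr (hspan.symm.le.trans (iSup_le fun c ↦ ?_))
  by_cases hc : ⨅ d, Module.End.eigenspace (π d) (c d) = ⊥
  · simp [hc]
  · obtain ⟨χ, hχ⟩ := π.exists_eq_weightSpace_of_iInf_eigenspace_ne_bot hc
    exact hχ ▸ le_iSup π.weightSpace χ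

lemma eq_one_of_forall_weights_apply_eq_one (hπ : ⨆ χ, π.weightSpace χ = ⊤) {d : D}
    (hd : ∀ χ ∈ π.weights, χ d = 1) : π d = 1 := by
  suffices ∀ χ, π.weightSpace χ ≤ LinearMap.eqLocus (π d) 1 from
    LinearMap.ext fun v ↦ (hπ ▸ iSup_le this) Submodule.mem_top
  intro χ
  by_cases hχ : χ ∈ π.weights
  · intro v hv
    simp [(π.mem_weightSpace_iff).mp hv d, hd χ hχ]
  · simp [not_not.mp hχ]

end CommGroup

section SemidirectProduct

open SemidirectProduct

variable {D F : Type*} [Group D] [Group F] {φ : F →* MulAut D}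
  (σ : Representation k (D ⋊[φ] F) V)

lemma map_weightSpace_comp_inl_le (f : F) (χ : D →* kˣ) :
    (weightSpace (σ.comp inl) χ).map (σ (inr f)) ≤
      weightSpace (σ.comp inl) (χ.comp (φ f⁻¹).toMonoidHom) := by
  rintro _ ⟨v, hv, rfl⟩
  rw [SetLike.mem_coe, mem_weightSpace_iff] at hv
  rw [mem_weightSpace_iff]
  intro d
  have hconj : (inl d : D ⋊[φ] F) * inr f = inr f * inl (φ f⁻¹ d) := by
    rw [map_inv, inl_aut_inv, ← mul_assoc, ← mul_assoc, ← map_mul, mul_inv_cancel, map_one,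
      one_mul]
  simp only [MonoidHom.comp_apply] at hv ⊢
  rw [← Module.End.mul_apply, ← map_mul, hconj, map_mul, Module.End.mul_apply, hv, map_smul]
  rfl

lemma comp_mem_weights {χ : D →* kˣ} (hχ : χ ∈ weights (σ.comp inl)) (f : F) :
    χ.comp (φ f⁻¹).toMonoidHom ∈ weights (σ.comp inl) := by
  refine fun hbot ↦ hχ ?_
  refine Submodule.map_injective_of_injective (σ.apply_bijective (inr f)).injective ?_
  rw [Submodule.map_bot, eq_bot_iff, ← hbot]
  exact σ.map_weightSpace_comp_inl_le f χ

lemma image_comp_weights (f : F) :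
    (fun χ : D →* kˣ ↦ χ.comp (φ f⁻¹).toMonoidHom) '' weights (σ.comp inl) =
      weights (σ.comp inl) := by
  refine Set.Subset.antisymm ?_ fun χ hχ ↦
    ⟨χ.comp (φ f).toMonoidHom, by simpa using comp_mem_weights σ hχ f⁻¹, ?_⟩
  · rintro _ ⟨χ, hχ, rfl⟩
    exact comp_mem_weights σ hχ f
  · ext d
    simp [map_inv]

end SemidirectProduct

end Representation

theorem CommGroup.closure_eq_top_of_forall_apply_eq_one {G M : Type*} [CommGroup G] [Finite G]
    [CommMonoid M] [HasEnoughRootsOfUnity M (Monoid.exponent G)] {Λ : Set (G →* Mˣ)}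
    (hΛ : ∀ g, (∀ χ ∈ Λ, χ g = 1) → g = 1) : Subgroup.closure Λ = ⊤ := by
  let e := subgroupOrderIsoSubgroupMonoidHom G M
  have hperp : e.symm (OrderDual.toDual (Subgroup.closure Λ)) = ⊥ :=
    eq_bot_iff.mpr fun g hg ↦ hΛ g fun χ hχ ↦
      (mem_subgroupOrderIsoSubgroupMonoidHom_symm_iff M _ g).mp hg χ (Subgroup.subset_closure hχ)
  simpa using congrArg (OrderDual.ofDual ∘ e) hperp

theorem stmt_2_general (D : Type) [CommGroup D] [Fintype D]
    (F : Type) [Group F] (φ : F →* MulAut D)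
    (m : ℕ) (hm : Monoid.exponent D = m)
    (k : Type) [Field k]
    (ζ : k) (hζ : IsPrimitiveRoot ζ m)
    (V : Type) [AddCommGroup V] [Module k V] [FiniteDimensional k V]
    (ρ : D ⋊[φ] F →* (V →ₗ[k] V)ˣ) (hρ : Function.Injective ρ) :
    (∃ Λ : Set (D →* kˣ),
      (∀ f : F, (fun χ : D →* kˣ => χ.comp (φ f⁻¹).toMonoidHom) '' Λ = Λ) ∧
      Λ.ncard ≤ Module.finrank k V ∧
      Subgroup.closure Λ = ⊤) ∧
    (∀ d : ℕ,
      (∀ Λ : Set (D →* kˣ),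
        (∀ f : F, (fun χ : D →* kˣ => χ.comp (φ f⁻¹).toMonoidHom) '' Λ = Λ) →
        Subgroup.closure Λ = ⊤ → d ≤ Λ.ncard) →
      d ≤ Module.finrank k V) := by
  subst hm
  let σ : Representation k (D ⋊[φ] F) V := (Units.coeHom _).comp ρ
  let π : Representation k D V := σ.comp SemidirectProduct.inl
  have hπ (d : D) : π d ^ Monoid.exponent D = 1 := by
    rw [← map_pow, Monoid.pow_exponent_eq_one, map_one]
  have hspan := π.iSup_weightSpace_eq_top hζ hπ
  have : HasEnoughRootsOfUnity k (Monoid.exponent D) := ⟨⟨ζ, hζ⟩, inferInstance⟩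
  have hgen : Subgroup.closure π.weights = ⊤ :=
    CommGroup.closure_eq_top_of_forall_apply_eq_one fun d hd ↦
      SemidirectProduct.inl_injective <| hρ <| by
        rw [map_one, map_one]
        exact Units.ext (π.eq_one_of_forall_weights_apply_eq_one hspan hd)
  have hcard := π.ncard_weights_le_finrank
  exact ⟨⟨π.weights, σ.image_comp_weights, hcard, hgen⟩,
    fun d hd ↦ (hd _ σ.image_comp_weights hgen).trans hcard⟩

/-- Let `D` be a finite abelian group of exponent `m`, `F` a finite
group acting on `D` by automorphisms (via `φ : F →* MulAut D`), and `G = D ⋊ F`.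
Let `k` be a field whose characteristic does not divide `m` and which contains a
primitive `m`-th root of unity.  If `G` admits a faithful `k`-linear representation
on a finite-dimensional `k`-vector space `V`, then there exists an `F`-invariant
subset `Λ` of the character group `X(D) = Hom(D, kˣ)`, of cardinality at most
`dim_k V`, which generates `X(D)` as an abelian group.  In particular, if every
`F`-invariant generating subset of `X(D)` has at least `d` elements, then
`dim_k V ≥ d`. -/
theorem stmt_2 (D : Type) [CommGroup D] [Fintype D]
    (F : Type) [Group F] [Fintype F] (φ : F →* MulAut D)
    (m : ℕ) (hm : Monoid.exponent D = m)
    (k : Type) [Field k] (hchar : ¬ (ringChar k ∣ m))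
    (ζ : k) (hζ : IsPrimitiveRoot ζ m)
    (V : Type) [AddCommGroup V] [Module k V] [FiniteDimensional k V]
    (ρ : D ⋊[φ] F →* (V →ₗ[k] V)ˣ) (hρ : Function.Injective ρ) :
    (∃ Λ : Set (D →* kˣ),
      (∀ f : F, (fun χ : D →* kˣ => χ.comp (φ f⁻¹).toMonoidHom) '' Λ = Λ) ∧
      Λ.ncard ≤ Module.finrank k V ∧
      Subgroup.closure Λ = ⊤) ∧
    (∀ d : ℕ,
      (∀ Λ : Set (D →* kˣ),
        (∀ f : F, (fun χ : D →* kˣ => χ.comp (φ f⁻¹).toMonoidHom) '' Λ = Λ) →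
        Subgroup.closure Λ = ⊤ → d ≤ Λ.ncard) →
      d ≤ Module.finrank k V) :=
  stmt_2_general D F φ m hm k ζ hζ V ρ hρ
end

section
/- Let p be a prime, r ≥ 2, and n = p^r. For i = 1, …, p let B_i = {(i−1)p^{r−1}+1, …, i·p^{r−1}} (the i-th big block). Let Λ = {a_{α,β} : α ∈ B_i and β ∈ B_j with j − i ≡ 1 (mod p)} ⊆ L_n. Then Λ generates L_n as an abelian group, and |Λ| = p^{2r−1}. -/
/-!
Every generator `a_{α,β}` has coordinate sum zero, and `L_n` is spanned by the differences
`e_α - e_β`. Reading block indices in `ZMod p`, the generators join each position to every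
position of the next block; going around the cycle of `p` blocks, `e_α - e_β` telescopes into
a sum of generators for any `α, β`. For the count, each `α` has exactly `p^(r-1)` partners `β`,
namely the whole next block, so `|Λ| = p^r · p^(r-1)`.
-/

/-- The vector `a_{α,β} ∈ ℤ^n` (positions `0`-indexed) with entry `1` in position
`α`, entry `-1` in position `β`, and `0` elsewhere. -/
def stdVecN (n : ℕ) (a b : ℕ) : Fin n → ℤ :=
  fun h => if h.val = a then 1 else if h.val = b then -1 else 0

open Finset

lemma eq_sum_smul_single_sub_single {ι R : Type*} [Fintype ι] [DecidableEq ι] [Ring R]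
    {v : ι → R} (hv : ∑ i, v i = 0) (j : ι) :
    ∑ i, v i • (Pi.single i 1 - Pi.single j 1 : ι → R) = v := by
  simp only [smul_sub, sum_sub_distrib, ← sum_smul, hv, zero_smul, sub_zero]
  funext k
  simp [Finset.sum_apply, Pi.single_apply]

lemma coe_closure_eq_setOf_sum_eq_zero {ι : Type*} [Fintype ι] [DecidableEq ι] [Nonempty ι]
    {S : Set (ι → ℤ)} (hS : ∀ v ∈ S, ∑ i, v i = 0)
    (hsingle : ∀ i j, Pi.single i 1 - Pi.single j 1 ∈ AddSubgroup.closure S) :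
    (AddSubgroup.closure S : Set (ι → ℤ)) = {v | ∑ i, v i = 0} := by
  ext v
  refine ⟨fun hv => ?_, fun hv => ?_⟩
  · induction hv using AddSubgroup.closure_induction with
    | mem v hv => exact hS v hv
    | zero => simp
    | add v w _ _ hv hw => simp_all [sum_add_distrib]
    | neg v _ hv => simp_all
  · rw [SetLike.mem_coe, ← eq_sum_smul_single_sub_single hv (Classical.arbitrary ι)]
    exact sum_mem fun i _ => AddSubgroup.zsmul_mem _ (hsingle _ _) _

lemma stdVecN_eq_single_sub_single {n a b : ℕ} (ha : a < n) (hb : b < n) (hab : a ≠ b) :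
    stdVecN n a b = Pi.single (⟨a, ha⟩ : Fin n) 1 - Pi.single (⟨b, hb⟩ : Fin n) 1 := by
  funext i
  simp only [stdVecN, Pi.sub_apply, Pi.single_apply, Fin.ext_iff]
  split_ifs <;> omega

lemma sum_stdVecN {n a b : ℕ} (ha : a < n) (hb : b < n) (hab : a ≠ b) :
    ∑ i, stdVecN n a b i = 0 := by
  simp [stdVecN_eq_single_sub_single ha hb hab, sum_sub_distrib]

lemma eq_and_eq_of_stdVecN_eq {n a b a' b' : ℕ} (ha : a < n) (hb : b < n) (hab : a ≠ b)
    (hab' : a' ≠ b') (h : stdVecN n a b = stdVecN n a' b') : a = a' ∧ b = b' := by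
  have ea := congrFun h ⟨a, ha⟩
  have eb := congrFun h ⟨b, hb⟩
  simp only [stdVecN] at ea eb
  split_ifs at ea eb <;> omega

def cyclicBlockGens (n p q : ℕ) : Set (Fin n → ℤ) :=
  {v | ∃ a b : ℕ, a < n ∧ b < n ∧ (b / q) % p = (a / q + 1) % p ∧ v = stdVecN n a b}

def cyclicBlock (p q x : ℕ) : ZMod p := (x / q : ℕ)

lemma div_mod_eq_succ_div_mod_iff {p q a b : ℕ} :
    b / q % p = (a / q + 1) % p ↔ cyclicBlock p q b = cyclicBlock p q a + 1 := by
  rw [cyclicBlock, cyclicBlock, ← Nat.cast_succ, ZMod.natCast_eq_natCast_iff']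

section Generation

variable {n p q : ℕ} [Fact (1 < p)]

lemma ne_of_cyclicBlock_eq_add_one {a b : ℕ} (h : cyclicBlock p q b = cyclicBlock p q a + 1) :
    a ≠ b := by
  rintro rfl
  simp at h

lemma single_sub_single_mem_closure_cyclicBlockGens_of_eq_add_one {a b : Fin n}
    (h : cyclicBlock p q b = cyclicBlock p q a + 1) :
    Pi.single a 1 - Pi.single b 1 ∈ AddSubgroup.closure (cyclicBlockGens n p q) := by
  rw [← stdVecN_eq_single_sub_single a.2 b.2 (ne_of_cyclicBlock_eq_add_one h)]
  exact AddSubgroup.subset_closure ⟨a, b, a.2, b.2, div_mod_eq_succ_div_mod_iff.2 h, rfl⟩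

lemma exists_cyclicBlock_eq (hq : 0 < q) (hn : n = p * q) (z : ZMod p) :
    ∃ c : Fin n, cyclicBlock p q c = z := by
  refine ⟨⟨z.val * q, by rw [hn]; exact Nat.mul_lt_mul_of_pos_right z.val_lt hq⟩, ?_⟩
  simp [cyclicBlock, Nat.mul_div_cancel _ hq]

lemma single_sub_single_mem_closure_cyclicBlockGens_of_eq_add (hq : 0 < q) (hn : n = p * q)
    (d : ℕ) {a b : Fin n} (h : cyclicBlock p q b = cyclicBlock p q a + (d + 1)) :
    Pi.single a 1 - Pi.single b 1 ∈ AddSubgroup.closure (cyclicBlockGens n p q) := by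
  induction d generalizing b with
  | zero => exact single_sub_single_mem_closure_cyclicBlockGens_of_eq_add_one (by simpa using h)
  | succ d ih =>
    obtain ⟨c, hc⟩ := exists_cyclicBlock_eq hq hn (cyclicBlock p q a + (d + 1))
    have hcb : cyclicBlock p q b = cyclicBlock p q c + 1 := by rw [h, hc]; push_cast; ring
    simpa using add_mem (ih hc) (single_sub_single_mem_closure_cyclicBlockGens_of_eq_add_one hcb)

lemma single_sub_single_mem_closure_cyclicBlockGens (hq : 0 < q) (hn : n = p * q)
    (a b : Fin n) :
    Pi.single a 1 - Pi.single b 1 ∈ AddSubgroup.closure (cyclicBlockGens n p q) :=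
  single_sub_single_mem_closure_cyclicBlockGens_of_eq_add hq hn
    (cyclicBlock p q b - cyclicBlock p q a - 1).val (by simp)

theorem coe_closure_cyclicBlockGens (hq : 0 < q) (hn : n = p * q) :
    (AddSubgroup.closure (cyclicBlockGens n p q) : Set (Fin n → ℤ)) =
      {v | ∑ i, v i = 0} := by
  have : NeZero n := ⟨by rw [hn]; exact Nat.mul_ne_zero (NeZero.ne p) hq.ne'⟩
  refine coe_closure_eq_setOf_sum_eq_zero ?_ (single_sub_single_mem_closure_cyclicBlockGens hq hn)
  rintro _ ⟨a, b, ha, hb, h, rfl⟩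
  exact sum_stdVecN ha hb (ne_of_cyclicBlock_eq_add_one (div_mod_eq_succ_div_mod_iff.1 h))

end Generation

lemma filter_div_mod_eq_eq_Ico {p q c : ℕ} (hq : 0 < q) (hc : c < p) :
    {b ∈ range (p * q) | b / q % p = c} = Ico (c * q) (c * q + q) := by
  ext b
  simp only [mem_filter, mem_range, mem_Ico]
  constructor
  · rintro ⟨hb, rfl⟩
    have : b / q < p := (Nat.div_lt_iff_lt_mul hq).2 hb
    rw [Nat.mod_eq_of_lt this]
    exact ⟨Nat.div_mul_le_self b q, by nlinarith [Nat.lt_div_mul_add hq (a := b)]⟩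
  · rintro ⟨h1, h2⟩
    have : b / q = c := Nat.div_eq_of_lt_le h1 (by linarith)
    refine ⟨?_, by rw [this, Nat.mod_eq_of_lt hc]⟩
    nlinarith

lemma card_filter_div_mod_eq_succ {n p q : ℕ} (hp : 0 < p) (hq : 0 < q) (hn : n = p * q) :
    #{ab ∈ range n ×ˢ range n | ab.2 / q % p = (ab.1 / q + 1) % p} = n * q := by
  rw [card_filter, sum_product]
  simp_rw [← card_filter]
  subst hn
  rw [sum_congr rfl fun a _ => by
    rw [filter_div_mod_eq_eq_Ico hq (Nat.mod_lt _ hp), Nat.card_Ico, Nat.add_sub_cancel_left]]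
  simp

lemma cyclicBlockGens_eq_image (n p q : ℕ) :
    cyclicBlockGens n p q = ({ab ∈ range n ×ˢ range n | ab.2 / q % p = (ab.1 / q + 1) % p}.image
      fun ab => stdVecN n ab.1 ab.2 : Finset (Fin n → ℤ)) := by
  ext v
  simp [cyclicBlockGens, eq_comm, and_assoc]

theorem ncard_cyclicBlockGens {n p q : ℕ} [Fact (1 < p)] (hq : 0 < q) (hn : n = p * q) :
    (cyclicBlockGens n p q).ncard = n * q := by
  rw [cyclicBlockGens_eq_image, Set.ncard_coe_finset, card_image_of_injOn,
    card_filter_div_mod_eq_succ (NeZero.pos p) hq hn]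
  rintro ⟨a, b⟩ hab ⟨a', b'⟩ hab' h
  simp only [coe_filter, mem_product, mem_range, div_mod_eq_succ_div_mod_iff] at hab hab'
  obtain ⟨⟨ha, hb⟩, hblock⟩ := hab
  have := eq_and_eq_of_stdVecN_eq ha hb (ne_of_cyclicBlock_eq_add_one hblock)
    (ne_of_cyclicBlock_eq_add_one hab'.2) h
  exact Prod.ext this.1 this.2

/-- Let `p` be a prime, `r ≥ 2`, `n = p^r`.  Subdivide the positions
(`0`-indexed, so position `x` corresponds to the integer `x+1`) into `p` big blocks
of length `p^(r-1)`; position `x` lies in the (`0`-indexed) big block `x / p^(r-1)`.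
Let `Λ = {a_{α,β} : the block of β ≡ the block of α + 1 (mod p)}`.  Then `Λ`
generates `L_n = {a ∈ ℤ^n : ∑ aᵢ = 0}` as an abelian group, and `|Λ| = p^(2r-1)`. -/
theorem stmt_5 (p r n : ℕ) (hp : p.Prime) (hr : 2 ≤ r) (hn : n = p ^ r)
    (Λ : Set (Fin n → ℤ))
    (hΛ : Λ = {v | ∃ a b : ℕ, a < n ∧ b < n ∧
      (b / p ^ (r - 1)) % p = (a / p ^ (r - 1) + 1) % p ∧ v = stdVecN n a b}) :
    (AddSubgroup.closure Λ : Set (Fin n → ℤ)) = {a : Fin n → ℤ | ∑ i, a i = 0} ∧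
    Λ.ncard = p ^ (2 * r - 1) := by
  have : Fact (1 < p) := ⟨hp.one_lt⟩
  have hq : 0 < p ^ (r - 1) := pow_pos hp.pos _
  have hnpq : n = p * p ^ (r - 1) := by rw [hn, ← pow_succ']; congr 1; omega
  change Λ = cyclicBlockGens n p (p ^ (r - 1)) at hΛ
  subst hΛ
  refine ⟨coe_closure_cyclicBlockGens hq hnpq, ?_⟩
  rw [ncard_cyclicBlockGens hq hnpq, hn, ← pow_add]
  congr 1
  omega
end

section
/- Let p be a prime, r ≥ 2, n = p^r, and let Λ = {a_{α,β} : α ∈ B_i and β ∈ B_j with j − i ≡ 1 (mod p)} ⊆ L_n, where B_i = {(i−1)p^{r−1}+1, …, i·p^{r−1}} for i = 1, …, p. Let ℤ[Λ] be the free abelian group on the set Λ and φ : ℤ[Λ] → L_n the group homomorphism sending the basis element corresponding to λ ∈ Λ to λ. Let σ ∈ S_n be the product of the p^{r−1} disjoint p-cycles (1 2 ⋯ p)(p+1 ⋯ 2p)⋯(n−p+1 ⋯ n). Then: (i) the coordinate-permutation action of σ on L_n maps Λ onto itself, so σ acts on ℤ[Λ] by permuting the basis elements; and (ii) this action of σ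 does not fix the kernel of φ pointwise; specifically, the element of ker φ given by the sum of the basis elements corresponding to a_{1, p^{r−1}+1}, a_{p^{r−1}+1, 2p^{r−1}+1}, …, a_{(p−1)p^{r−1}+1, 1} is a nonzero element of ker φ not fixed by σ. -/
/-
The block shift `σ` only moves positions inside small blocks of length `p`, and these refine
the big blocks of length `q = p^(r-1)` because `r ≥ 2`; hence `σ` preserves big blocks and
permutes `Λ`. The element `w` is the cycle of arrows `0 → q → 2q → ⋯ → (p-1)q → 0`, which
telescopes to `0` under `φ`. It is not fixed: the coefficient of `a_{0,q}` in `w` is `1`, whereas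
`σ · w` is supported on arrows starting at positions `tq + 1`, none of which is `0`.
-/

/-- The permutation of `{0, …, n-1}` (`p ∣ n`) which cyclically shifts each of the
`n/p` small blocks of `p` consecutive positions: the product of the `n/p` disjoint
`p`-cycles `(1 2 ⋯ p)(p+1 ⋯ 2p)⋯(n-p+1 ⋯ n)` (written `0`-indexed). -/
def blockShift (p n : ℕ) (hp : 0 < p) (hpn : p ∣ n) : Equiv.Perm (Fin n) where
  toFun x := ⟨p * (x.val / p) + (x.val % p + 1) % p, by
    have hc : (x.val % p + 1) % p < p := Nat.mod_lt _ hp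
    have hd : x.val / p < n / p := Nat.div_lt_div_of_lt_of_dvd hpn x.isLt
    calc p * (x.val / p) + (x.val % p + 1) % p < p * (x.val / p) + p := by omega
      _ = p * (x.val / p + 1) := by rw [Nat.mul_succ]
      _ ≤ p * (n / p) := Nat.mul_le_mul (le_refl p) hd
      _ = n := Nat.mul_div_cancel' hpn⟩
  invFun x := ⟨p * (x.val / p) + (x.val % p + (p - 1)) % p, by
    have hc : (x.val % p + (p - 1)) % p < p := Nat.mod_lt _ hp
    have hd : x.val / p < n / p := Nat.div_lt_div_of_lt_of_dvd hpn x.isLt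
    calc p * (x.val / p) + (x.val % p + (p - 1)) % p < p * (x.val / p) + p := by
          omega
      _ = p * (x.val / p + 1) := by rw [Nat.mul_succ]
      _ ≤ p * (n / p) := Nat.mul_le_mul (le_refl p) hd
      _ = n := Nat.mul_div_cancel' hpn⟩
  left_inv x := by
    apply Fin.ext
    have hc : (x.val % p + 1) % p < p := Nat.mod_lt _ hp
    have hb : x.val % p < p := Nat.mod_lt _ hp
    show p * ((p * (x.val / p) + (x.val % p + 1) % p) / p)
        + ((p * (x.val / p) + (x.val % p + 1) % p) % p + (p - 1)) % p = x.val
    rw [Nat.mul_add_div hp, Nat.div_eq_of_lt hc, Nat.add_zero, Nat.mul_add_mod,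
      Nat.mod_eq_of_lt hc, Nat.mod_add_mod]
    have h4 : x.val % p + 1 + (p - 1) = x.val % p + p := by omega
    rw [h4, Nat.add_mod_right, Nat.mod_eq_of_lt hb]
    exact Nat.div_add_mod x.val p
  right_inv x := by
    apply Fin.ext
    have hc : (x.val % p + (p - 1)) % p < p := Nat.mod_lt _ hp
    have hb : x.val % p < p := Nat.mod_lt _ hp
    show p * ((p * (x.val / p) + (x.val % p + (p - 1)) % p) / p)
        + ((p * (x.val / p) + (x.val % p + (p - 1)) % p) % p + 1) % p = x.val
    rw [Nat.mul_add_div hp, Nat.div_eq_of_lt hc, Nat.add_zero, Nat.mul_add_mod,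
      Nat.mod_eq_of_lt hc, Nat.mod_add_mod]
    have h4 : x.val % p + (p - 1) + 1 = x.val % p + p := by omega
    rw [h4, Nat.add_mod_right, Nat.mod_eq_of_lt hb]
    exact Nat.div_add_mod x.val p


open Finset

lemma blockShift_val (p n : ℕ) (hp : 0 < p) (hpn : p ∣ n) (x : Fin n) :
    (blockShift p n hp hpn x).val = p * (x.val / p) + (x.val % p + 1) % p :=
  rfl

lemma blockShift_inv_val (p n : ℕ) (hp : 0 < p) (hpn : p ∣ n) (x : Fin n) :
    ((blockShift p n hp hpn)⁻¹ x).val = p * (x.val / p) + (x.val % p + (p - 1)) % p :=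
  rfl

lemma blockShift_val_div {p n q : ℕ} (hp : 0 < p) (hpn : p ∣ n) (hpq : p ∣ q) (x : Fin n) :
    (blockShift p n hp hpn x).val / q = x.val / q := by
  obtain ⟨k, rfl⟩ := hpq
  rw [blockShift_val, ← Nat.div_div_eq_div_mul, ← Nat.div_div_eq_div_mul, Nat.mul_add_div hp,
    Nat.div_eq_of_lt (Nat.mod_lt _ hp), Nat.add_zero]

section stdVecN

variable {n : ℕ}

lemma stdVecN_apply_of_val_eq {a b : ℕ} {i : Fin n} (h : i.val = a) : stdVecN n a b i = 1 :=
  if_pos h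

lemma stdVecN_apply_ne_one {a b : ℕ} {i : Fin n} (h : i.val ≠ a) : stdVecN n a b i ≠ 1 := by
  unfold stdVecN
  split_ifs <;> simp_all

lemma stdVecN_eq_sub {a b : ℕ} (hab : a ≠ b) :
    stdVecN n a b = (fun i : Fin n => if i.val = a then (1 : ℤ) else 0) -
      fun i : Fin n => if i.val = b then (1 : ℤ) else 0 := by
  funext i
  simp only [stdVecN, Pi.sub_apply]
  split_ifs <;> omega

lemma stdVecN_comp_perm (τ : Equiv.Perm (Fin n)) (a b : Fin n) :
    stdVecN n a b ∘ τ = stdVecN n (τ⁻¹ a) (τ⁻¹ b) := by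
  funext i
  simp only [Function.comp_apply, stdVecN, Fin.val_inj, Equiv.Perm.eq_inv_iff_eq]

end stdVecN

/-- The set `Λ`, for big blocks of length `q`. -/
def blockArrows (n p q : ℕ) : Set (Fin n → ℤ) :=
  {v | ∃ a b : ℕ, a < n ∧ b < n ∧ (b / q) % p = (a / q + 1) % p ∧ v = stdVecN n a b}

lemma comp_inv_mem_blockArrows {n p q : ℕ} {τ : Equiv.Perm (Fin n)}
    (hτ : ∀ x, (τ x).val / q = x.val / q) {v : Fin n → ℤ} (hv : v ∈ blockArrows n p q) :
    v ∘ ⇑τ⁻¹ ∈ blockArrows n p q := by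
  obtain ⟨a, b, ha, hb, hab, rfl⟩ := hv
  refine ⟨(τ ⟨a, ha⟩).val, (τ ⟨b, hb⟩).val, Fin.isLt _, Fin.isLt _, ?_, ?_⟩
  · rwa [hτ, hτ]
  · simpa using stdVecN_comp_perm τ⁻¹ ⟨a, ha⟩ ⟨b, hb⟩

lemma image_comp_inv_blockArrows {n p q : ℕ} {τ : Equiv.Perm (Fin n)}
    (hτ : ∀ x, (τ x).val / q = x.val / q) :
    (fun v : Fin n → ℤ => v ∘ ⇑τ⁻¹) '' blockArrows n p q = blockArrows n p q := by
  have hτinv : ∀ x, (τ⁻¹ x).val / q = x.val / q := fun x => by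
    simpa using (hτ (τ⁻¹ x)).symm
  apply Set.Subset.antisymm
  · exact Set.image_subset_iff.2 fun v hv => comp_inv_mem_blockArrows hτ hv
  · intro v hv
    refine ⟨v ∘ τ, by simpa using comp_inv_mem_blockArrows hτinv hv, ?_⟩
    funext i
    simp

lemma sum_range_sub_apply_succ_mod {G : Type*} [AddCommGroup G] (f : ℕ → G) (p : ℕ) :
    ∑ t ∈ range p, (f t - f ((t + 1) % p)) = 0 := by
  cases p with
  | zero => simp
  | succ m =>
    have hlt : ∀ t ∈ range m, f t - f ((t + 1) % (m + 1)) = f t - f (t + 1) := fun t ht => by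
      rw [Nat.mod_eq_of_lt (by simpa using ht)]
    rw [sum_range_succ, sum_congr rfl hlt, sum_range_sub', Nat.mod_self]
    abel

/-- The element `w`: the cycle of arrows `0 → q → 2q → ⋯ → (p-1)q → 0`. -/
noncomputable def blockCycle (n p q : ℕ) : (Fin n → ℤ) →₀ ℤ :=
  ∑ t ∈ range p, Finsupp.single (stdVecN n (t * q) ((t + 1) % p * q)) 1

section blockCycle

variable {n p q : ℕ}

lemma support_blockCycle_subset (hq : 0 < q) (hn : n = p * q) :
    ↑(blockCycle n p q).support ⊆ blockArrows n p q := by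
  intro v hv
  obtain ⟨t, ht, hvt⟩ := Finsupp.mem_support_finsetSum v hv
  rw [mem_singleton.mp (Finsupp.support_single_subset hvt)]
  have hp : 0 < p := by
    have := mem_range.mp ht
    omega
  refine ⟨t * q, (t + 1) % p * q, ?_, ?_, ?_, rfl⟩
  · exact hn ▸ Nat.mul_lt_mul_of_pos_right (mem_range.mp ht) hq
  · exact hn ▸ Nat.mul_lt_mul_of_pos_right (Nat.mod_lt _ hp) hq
  · rw [Nat.mul_div_cancel _ hq, Nat.mul_div_cancel _ hq, Nat.mod_mod]

lemma blockCycle_sum_smul (hp : 2 ≤ p) (hq : 0 < q) :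
    (blockCycle n p q).sum (fun v c => c • v) = 0 := by
  have hne : ∀ t ∈ range p, t * q ≠ (t + 1) % p * q := fun t ht h => by
    have ht := mem_range.mp ht
    have := Nat.eq_of_mul_eq_mul_right hq h
    rcases Nat.lt_or_ge (t + 1) p with h' | h'
    · rw [Nat.mod_eq_of_lt h'] at this; omega
    · rw [show t + 1 = p by omega, Nat.mod_self] at this; omega
  rw [blockCycle, ← Finsupp.sum_finsetSum_index (h := fun (v : Fin n → ℤ) (c : ℤ) => c • v)
    (fun _ => zero_smul ℤ _) (fun _ _ _ => add_smul _ _ _)]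
  simp only [Finsupp.sum_single_index, zero_smul, one_smul]
  rw [sum_congr rfl fun t ht => stdVecN_eq_sub (hne t ht)]
  exact sum_range_sub_apply_succ_mod (fun t (i : Fin n) => if i.val = t * q then (1 : ℤ) else 0) p

lemma blockCycle_apply_stdVecN_zero (hp : 2 ≤ p) (hq : 0 < q) (hn : 0 < n) :
    blockCycle n p q (stdVecN n 0 q) = 1 := by
  have hoff : ∀ t ∈ range p, t ≠ 0 →
      Finsupp.single (stdVecN n (t * q) ((t + 1) % p * q)) (1 : ℤ) (stdVecN n 0 q) = 0 :=
    fun t _ ht => Finsupp.single_eq_of_ne fun h =>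
      stdVecN_apply_ne_one (i := ⟨0, hn⟩) (a := t * q) (b := (t + 1) % p * q)
        (by simp [ht, hq.ne']) (h ▸ stdVecN_apply_of_val_eq rfl)
  rw [blockCycle, Finsupp.finsetSum_apply, sum_eq_single_of_mem 0 (by simp; omega) hoff,
    Nat.zero_add, Nat.mod_eq_of_lt (by omega : 1 < p), Nat.zero_mul, Nat.one_mul,
    Finsupp.single_eq_same]

/-- `(σ · a_{tq,β})` reads position `0` at `σ⁻¹ 0 = p - 1`, which is not the multiple `tq` of `p`,
so its entry there is not `1`. -/
lemma mapDomain_blockShift_blockCycle_apply_stdVecN_zero (hp : 2 ≤ p) (hpn : p ∣ n)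
    (hpq : p ∣ q) (hn : 0 < n) :
    Finsupp.mapDomain (fun v : Fin n → ℤ => v ∘ ⇑(blockShift p n (by omega) hpn)⁻¹)
      (blockCycle n p q) (stdVecN n 0 q) = 0 := by
  rw [blockCycle, Finsupp.mapDomain_finsetSum, Finsupp.finsetSum_apply]
  refine sum_eq_zero fun t _ => ?_
  rw [Finsupp.mapDomain_single]
  refine Finsupp.single_eq_of_ne fun h => ?_
  have hσ : ((blockShift p n (by omega) hpn)⁻¹ ⟨0, hn⟩).val = p - 1 := by
    rw [blockShift_inv_val, Nat.zero_div, Nat.mul_zero, Nat.zero_mod, Nat.zero_add,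
      Nat.zero_add, Nat.mod_eq_of_lt (by omega)]
  have hmod : t * q % p = 0 := Nat.mod_eq_zero_of_dvd (hpq.mul_left t)
  have hne : ((blockShift p n (by omega) hpn)⁻¹ ⟨0, hn⟩).val ≠ t * q := fun h' => by
    rw [hσ] at h'
    rw [← h', Nat.mod_eq_of_lt (by omega)] at hmod
    omega
  exact stdVecN_apply_ne_one hne (congrFun h ⟨0, hn⟩ ▸ stdVecN_apply_of_val_eq rfl)

end blockCycle

/-- Let `p` be a prime, `r ≥ 2`, `n = p^r`, and let
`Λ = {a_{α,β} : block(β) ≡ block(α) + 1 (mod p)} ⊆ L_n` (big blocks of length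
`p^(r-1)`, positions `0`-indexed).  The free abelian group `ℤ[Λ]` is encoded as the
finitely supported functions `(Fin n → ℤ) →₀ ℤ` with support contained in `Λ`, and
`φ : ℤ[Λ] → L_n` is `f ↦ ∑_λ f(λ)·λ`.  Let `σ ∈ S_n` be the product of the
`p^(r-1)` disjoint `p`-cycles `(1 2 ⋯ p)(p+1 ⋯ 2p)⋯(n-p+1 ⋯ n)`, acting on vectors
by `(σ·v)_i = v_{σ⁻¹(i)}` and on `ℤ[Λ]` by permuting basis elements (i.e. by
`Finsupp.mapDomain`), and let `w ∈ ℤ[Λ]` be the sum of the basis elements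
corresponding to `a_{1, p^(r-1)+1}, a_{p^(r-1)+1, 2p^(r-1)+1}, …,
a_{(p-1)p^(r-1)+1, 1}` (written `0`-indexed).  Then: (i) the action of `σ` maps `Λ`
onto itself; and (ii) `w` is supported in `Λ`, lies in `ker φ`, is nonzero, and is
not fixed by `σ`. -/
theorem stmt_6 (p r n : ℕ) (hp : p.Prime) (hr : 2 ≤ r) (hn : n = p ^ r)
    (hpn : p ∣ n)
    (σ : Equiv.Perm (Fin n)) (hσ : σ = blockShift p n hp.pos hpn)
    (Λ : Set (Fin n → ℤ))
    (hΛ : Λ = {v | ∃ a b : ℕ, a < n ∧ b < n ∧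
      (b / p ^ (r - 1)) % p = (a / p ^ (r - 1) + 1) % p ∧ v = stdVecN n a b})
    (w : (Fin n → ℤ) →₀ ℤ)
    (hw : w = ∑ t ∈ Finset.range p,
      Finsupp.single (stdVecN n (t * p ^ (r - 1)) (((t + 1) % p) * p ^ (r - 1))) 1) :
    (fun v : Fin n → ℤ => v ∘ ⇑σ⁻¹) '' Λ = Λ ∧
    ↑w.support ⊆ Λ ∧
    w.sum (fun v c => c • v) = 0 ∧
    w ≠ 0 ∧
    Finsupp.mapDomain (fun v : Fin n → ℤ => v ∘ ⇑σ⁻¹) w ≠ w := by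
  set q := p ^ (r - 1)
  subst hσ
  obtain rfl : Λ = blockArrows n p q := hΛ
  obtain rfl : w = blockCycle n p q := hw
  have hp2 := hp.two_le
  have hq : 0 < q := Nat.pow_pos hp.pos
  have hpq : p ∣ q := dvd_pow_self p (by omega)
  have hnq : n = p * q := by rw [hn, ← pow_succ']; congr 1; omega
  have hn0 : 0 < n := hnq ▸ Nat.mul_pos hp.pos hq
  have hw_apply := blockCycle_apply_stdVecN_zero (n := n) hp2 hq hn0
  have hσw_apply := mapDomain_blockShift_blockCycle_apply_stdVecN_zero hp2 hpn hpq hn0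
  refine ⟨image_comp_inv_blockArrows (blockShift_val_div hp.pos hpn hpq),
    support_blockCycle_subset hq hnq, blockCycle_sum_smul hp2 hq, fun h => ?_, fun h => ?_⟩
  · simp [h] at hw_apply
  · rw [h, hw_apply] at hσw_apply
    exact one_ne_zero hσw_apply
end

section
/- Let p be a prime, q = p^e a power of p with e ≥ 1, m a positive integer, and n = mp. For i = 1, …, m let b_i = {(i−1)p+1, …, ip} and let σ_i ∈ S_n be the p-cycle ((i−1)p+1, (i−1)p+2, …, ip), fixing all other points. Let Σ : X_n(q) → X_m(q) be the group homomorphism sending a = (a_1,…,a_n) to (s_1,…,s_m), where s_i = a_{(i−1)p+1} + a_{(i−1)p+2} + ⋯ + a_{ip}. Suppose Λ ⊆ X_n(q) is invariant under σ_i for every i = 1, …, m. If s ∈ Σ(Λ) has at least two entries that are not divisible by p in ℤ/qℤ (i.e., not of the form p·c with c ∈ ℤ/qℤ), then the fiber {a ∈ Λ : Σ(a) = s} contains at least p² elements. -/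
/-!
The block cycles `σ_{j₁}` and `σ_{j₂}` preserve `Λ` and all block sums, so for `a` in the fiber
over `s` the `p²` functions `a ∘ σ_{j₁}^{-k} ∘ σ_{j₂}^{-l}`, `k, l ∈ ℤ/p`, lie in the same fiber.
They are pairwise distinct: if two of them agree, the entries of `a` on block `j₁` (or `j₂`),
read as a function on `ℤ/p`, have a nonzero period; since `p` is prime such a function is
constant, and then the block sum `s_{j₁}` would be `p` times that constant.
-/

def sigmaMap (p m q : ℕ) : (Fin (m * p) → ZMod q) → (Fin m → ZMod q) :=
  fun a j => ∑ t : Fin p, a ⟨p * j.val + t.val, by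
    have h1 : t.val < p := t.isLt
    have h2 : j.val < m := j.isLt
    calc p * j.val + t.val < p * (j.val + 1) := by rw [Nat.mul_succ]; omega
      _ ≤ p * m := Nat.mul_le_mul (le_refl p) (by omega)
      _ = m * p := Nat.mul_comm p m⟩

open Function

theorem ZMod.apply_eq_apply_zero_of_periodic {β : Type*} {p : ℕ} [Fact p.Prime]
    {g : ZMod p → β} {d : ZMod p} (hd : d ≠ 0) (hg : Periodic g d) (u : ZMod p) :
    g u = g 0 := by
  have hu : (u * d⁻¹).val • d = u := by
    rw [nsmul_eq_mul, ZMod.natCast_zmod_val, mul_assoc, inv_mul_cancel₀ hd, mul_one]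
  simpa [hu] using hg.nsmul (u * d⁻¹).val 0

theorem ZMod.injective_shift_of_sum_ne_mul {R : Type*} [Semiring R] {p : ℕ} [Fact p.Prime]
    {g : ZMod p → R} (hg : ¬ ∃ c : R, ∑ z, g z = p * c) :
    Injective fun (k z : ZMod p) => g (z - k) := by
  intro k k' hkk
  by_contra hne
  have hper : Periodic g (k - k') := fun u => by
    simpa [add_sub_assoc] using (congrFun hkk (u + k)).symm
  have hconst := ZMod.apply_eq_apply_zero_of_periodic (sub_ne_zero.2 hne) hper
  refine hg ⟨g 0, ?_⟩
  rw [Finset.sum_congr rfl fun z _ => hconst z, Finset.sum_const, Finset.card_univ, ZMod.card,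
    nsmul_eq_mul]

theorem Equiv.Perm.comp_inv_pow_mem {α β : Type*} {τ : Equiv.Perm α} {Λ : Set (α → β)}
    (hΛ : (fun a : α → β => a ∘ ⇑τ⁻¹) '' Λ = Λ) (k : ℕ) {c : α → β} (hc : c ∈ Λ) :
    c ∘ ⇑(τ ^ k)⁻¹ ∈ Λ := by
  induction k with
  | zero => simpa using hc
  | succ k ih =>
    rw [pow_succ', mul_inv_rev, Equiv.Perm.coe_mul, ← comp_assoc, ← hΛ]
    exact ⟨_, ih, rfl⟩

namespace BlockCycle

variable {p m q : ℕ}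

/-- Position `z` (counted modulo `p`) of the `j`-th block of `Fin (m * p)`. -/
def blockPos (p : ℕ) [NeZero p] (j : Fin m) (z : ZMod p) : Fin (m * p) :=
  ⟨p * j.val + z.val, by
    have h1 : z.val < p := ZMod.val_lt z
    have h2 : j.val < m := j.isLt
    calc p * j.val + z.val < p * (j.val + 1) := by rw [Nat.mul_succ]; omega
      _ ≤ p * m := Nat.mul_le_mul (le_refl p) (by omega)
      _ = m * p := Nat.mul_comm p m⟩

theorem blockPos_div [NeZero p] (j : Fin m) (z : ZMod p) : (blockPos p j z).val / p = j.val := by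
  change (p * j.val + z.val) / p = j.val
  rw [Nat.mul_add_div (NeZero.pos p), Nat.div_eq_of_lt (ZMod.val_lt z), Nat.add_zero]

theorem sigmaMap_apply [NeZero p] (c : Fin (m * p) → ZMod q) (j : Fin m) :
    sigmaMap p m q c j = ∑ z : ZMod p, c (blockPos p j z) := by
  let e : Fin p ≃ ZMod p :=
    ⟨fun t => t.val, fun z => ⟨z.val, z.val_lt⟩, fun t => Fin.ext (ZMod.val_natCast_of_lt t.isLt),
      ZMod.natCast_zmod_val⟩
  refine Fintype.sum_equiv e _ _ fun t => congrArg c (Fin.ext ?_)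
  change p * j.val + t.val = p * j.val + (t.val : ZMod p).val
  rw [ZMod.val_natCast_of_lt t.isLt]

/-- `τ` is the cycle `ip ↦ ip + 1 ↦ ⋯ ↦ ip + p - 1 ↦ ip` on the `i`-th block. -/
def IsBlockCycle (p : ℕ) (i : Fin m) (τ : Equiv.Perm (Fin (m * p))) : Prop :=
  ∀ x, (τ x).val = if x.val / p = i.val then p * i.val + (x.val % p + 1) % p else x.val

namespace IsBlockCycle

variable {i : Fin m} {τ : Equiv.Perm (Fin (m * p))}

theorem apply_blockPos [NeZero p] (hτ : IsBlockCycle p i τ) (z : ZMod p) :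
    τ (blockPos p i z) = blockPos p i (z + 1) := by
  refine Fin.ext ?_
  rw [hτ, if_pos (blockPos_div i z)]
  change p * i.val + ((p * i.val + z.val) % p + 1) % p = p * i.val + (z + 1).val
  rw [Nat.mul_add_mod, Nat.mod_eq_of_lt (ZMod.val_lt z), ZMod.val_add, ZMod.val_one_eq_one_mod,
    Nat.add_mod_mod]

theorem apply_of_ne (hτ : IsBlockCycle p i τ) {x : Fin (m * p)} (hx : x.val / p ≠ i.val) :
    τ x = x :=
  Fin.ext (by rw [hτ, if_neg hx])

theorem inv_pow_apply_blockPos [NeZero p] (hτ : IsBlockCycle p i τ) (k : ℕ) (z : ZMod p) :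
    (τ ^ k)⁻¹ (blockPos p i z) = blockPos p i (z - k) := by
  rw [Equiv.Perm.inv_eq_iff_eq]
  induction k generalizing z with
  | zero => simp
  | succ k ih =>
    have hz : z - ((k + 1 : ℕ) : ZMod p) = z - 1 - k := by push_cast; ring
    rw [pow_succ', Equiv.Perm.mul_apply, hz, ← ih, hτ.apply_blockPos, sub_add_cancel]

theorem inv_pow_apply_blockPos_of_ne [NeZero p] (hτ : IsBlockCycle p i τ) (k : ℕ) {j : Fin m}
    (hj : j ≠ i) (z : ZMod p) : (τ ^ k)⁻¹ (blockPos p j z) = blockPos p j z := by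
  have hx : (blockPos p j z).val / p ≠ i.val := by rw [blockPos_div]; exact Fin.val_ne_of_ne hj
  rw [Equiv.Perm.inv_eq_iff_eq, Equiv.Perm.coe_pow, iterate_fixed (hτ.apply_of_ne hx)]

theorem sigmaMap_comp_inv_pow [NeZero p] (hτ : IsBlockCycle p i τ) (c : Fin (m * p) → ZMod q)
    (k : ℕ) : sigmaMap p m q (c ∘ ⇑(τ ^ k)⁻¹) = sigmaMap p m q c := by
  funext j
  simp only [sigmaMap_apply, comp_apply]
  by_cases hj : j = i
  · subst hj
    simp only [hτ.inv_pow_apply_blockPos]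
    exact Fintype.sum_equiv (Equiv.subRight (k : ZMod p)) _ _ fun z => rfl
  · simp only [hτ.inv_pow_apply_blockPos_of_ne k hj]

end IsBlockCycle

end BlockCycle

open BlockCycle

theorem stmt_7_general (p e q m : ℕ) (hp : p.Prime) (hq : q = p ^ e)
    (σ : Fin m → Equiv.Perm (Fin (m * p)))
    (hσ : ∀ (i : Fin m) (x : Fin (m * p)),
      ((σ i) x).val =
        if x.val / p = i.val then p * i.val + (x.val % p + 1) % p else x.val)
    (Λ : Set (Fin (m * p) → ZMod q))
    (hΛinv : ∀ i : Fin m, (fun a : Fin (m * p) → ZMod q => a ∘ ⇑(σ i)⁻¹) '' Λ = Λ)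
    (s : Fin m → ZMod q) (hs : s ∈ sigmaMap p m q '' Λ)
    (j₁ j₂ : Fin m) (hj : j₁ ≠ j₂)
    (h1 : ¬ ∃ c : ZMod q, s j₁ = p * c) (h2 : ¬ ∃ c : ZMod q, s j₂ = p * c) :
    p ^ 2 ≤ {a ∈ Λ | sigmaMap p m q a = s}.ncard := by
  have : Fact p.Prime := ⟨hp⟩
  have : NeZero q := ⟨hq ▸ pow_ne_zero e hp.ne_zero⟩
  obtain ⟨a, haΛ, rfl⟩ := hs
  have hσ' : ∀ i, IsBlockCycle p i (σ i) := hσ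
  let F : ZMod p × ZMod p → Fin (m * p) → ZMod q :=
    fun kl => (a ∘ ⇑(σ j₁ ^ kl.1.val)⁻¹) ∘ ⇑(σ j₂ ^ kl.2.val)⁻¹
  have hF_mem : ∀ kl, F kl ∈ {b ∈ Λ | sigmaMap p m q b = sigmaMap p m q a} := fun kl =>
    ⟨(σ j₂).comp_inv_pow_mem (hΛinv j₂) _ ((σ j₁).comp_inv_pow_mem (hΛinv j₁) _ haΛ),
      by rw [(hσ' j₂).sigmaMap_comp_inv_pow, (hσ' j₁).sigmaMap_comp_inv_pow]⟩
  have hF_inj : Injective F := by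
    rintro ⟨k, l⟩ ⟨k', l'⟩ hkl
    rw [sigmaMap_apply] at h1 h2
    have hk : k = k' := by
      refine ZMod.injective_shift_of_sum_ne_mul h1 (funext fun z => ?_)
      have h := congrFun hkl (blockPos p j₁ z)
      simp only [F, comp_apply, (hσ' j₂).inv_pow_apply_blockPos_of_ne _ hj,
        (hσ' j₁).inv_pow_apply_blockPos, ZMod.natCast_zmod_val] at h
      exact h
    have hl : l = l' := by
      refine ZMod.injective_shift_of_sum_ne_mul h2 (funext fun z => ?_)
      have h := congrFun hkl (blockPos p j₂ z)
      simp only [F, comp_apply, (hσ' j₁).inv_pow_apply_blockPos_of_ne _ hj.symm,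
        (hσ' j₂).inv_pow_apply_blockPos, ZMod.natCast_zmod_val] at h
      exact h
    rw [hk, hl]
  calc p ^ 2 = (Set.univ : Set (ZMod p × ZMod p)).ncard := by simp [sq]
    _ ≤ _ := Set.ncard_le_ncard_of_injOn F (fun kl _ => hF_mem kl) hF_inj.injOn (Set.toFinite _)

/-- Let `p` be a prime, `q = p^e` (`e ≥ 1`), `m ≥ 1`, `n = m·p`.
For `i` a (`0`-indexed) block index, let `σᵢ ∈ S_n` be the `p`-cycle cyclically
permuting the positions of the `i`-th block `{ip, …, ip+p-1}` (`0`-indexed) and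
fixing all other points.  Suppose `Λ ⊆ X_n(q)` is invariant under every `σᵢ`.
If `s ∈ Σ(Λ)` has at least two entries not divisible by `p` in `ℤ/qℤ`, then the
fiber `{a ∈ Λ : Σ(a) = s}` contains at least `p²` elements. -/
theorem stmt_7 (p e q m : ℕ) (hp : p.Prime) (he : 1 ≤ e) (hq : q = p ^ e)
    (hm : 0 < m)
    (σ : Fin m → Equiv.Perm (Fin (m * p)))
    (hσ : ∀ (i : Fin m) (x : Fin (m * p)),
      ((σ i) x).val =
        if x.val / p = i.val then p * i.val + (x.val % p + 1) % p else x.val)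
    (Λ : Set (Fin (m * p) → ZMod q))
    (hΛsub : ∀ a ∈ Λ, ∑ i, a i = 0)
    (hΛinv : ∀ i : Fin m, (fun a : Fin (m * p) → ZMod q => a ∘ ⇑(σ i)⁻¹) '' Λ = Λ)
    (s : Fin m → ZMod q) (hs : s ∈ sigmaMap p m q '' Λ)
    (j₁ j₂ : Fin m) (hj : j₁ ≠ j₂)
    (h1 : ¬ ∃ c : ZMod q, s j₁ = p * c) (h2 : ¬ ∃ c : ZMod q, s j₂ = p * c) :
    p ^ 2 ≤ {a ∈ Λ | sigmaMap p m q a = s}.ncard :=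
  stmt_7_general p e q m hp hq σ hσ Λ hΛinv s hs j₁ j₂ hj h1 h2
end

section
/- Let p be a prime, q = p^e a power of p with e ≥ 1, m a positive integer, and n = mp. Let Σ : X_n(q) → X_m(q) be the group homomorphism sending a = (a_1,…,a_n) to (s_1,…,s_m), where s_i = a_{(i−1)p+1} + a_{(i−1)p+2} + ⋯ + a_{ip}. If Λ ⊆ X_n(q) generates X_n(q) as an abelian group, then the set Σ(Λ) \ p·X_m(q), obtained from the image Σ(Λ) by removing all elements that lie in p·X_m(q) = {p·t : t ∈ X_m(q)}, generates X_m(q) as an abelian group. -/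
namespace AddSubgroup

variable {G : Type*} [AddCommGroup G]

theorem exists_add_pow_nsmul_of_le_sup {H X : AddSubgroup G} {n : ℕ}
    (hX : X ≤ H ⊔ X.map (nsmulAddMonoidHom n)) (k : ℕ) :
    ∀ x ∈ X, ∃ h ∈ H, ∃ t ∈ X, x = h + n ^ k • t := by
  induction k with
  | zero => exact fun x hx => ⟨0, H.zero_mem, x, hx, by simp⟩
  | succ k ih =>
    intro x hx
    obtain ⟨h, hh, t, ht, rfl⟩ := ih x hx
    obtain ⟨h', hh', _, ⟨t', ht', rfl⟩, rfl⟩ := mem_sup.1 (hX ht)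
    refine ⟨h + n ^ k • h', H.add_mem hh (H.nsmul_mem hh' _), t', ht', ?_⟩
    simp only [nsmulAddMonoidHom_apply, smul_add, smul_smul, pow_succ, add_assoc]

theorem closure_diff_nsmul_eq_of_closure_eq {X : AddSubgroup G} {S : Set G} {n k : ℕ}
    (hS : closure S = X) (hX : ∀ x ∈ X, n ^ k • x = 0) :
    closure (S \ {s | ∃ t ∈ X, s = n • t}) = X := by
  set H := closure (S \ {s | ∃ t ∈ X, s = n • t})
  have hHX : H ≤ X := hS ▸ closure_mono Set.sdiff_subset
  have hX_sup : X ≤ H ⊔ X.map (nsmulAddMonoidHom n) := by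
    refine hS.symm.le.trans (closure_le _ |>.2 fun s hs => ?_)
    by_cases hmul : ∃ t ∈ X, s = n • t
    · obtain ⟨t, ht, rfl⟩ := hmul
      exact mem_sup_right ⟨t, ht, rfl⟩
    · exact mem_sup_left (subset_closure ⟨hs, hmul⟩)
  refine le_antisymm hHX fun x hx => ?_
  obtain ⟨h, hh, t, ht, rfl⟩ := exists_add_pow_nsmul_of_le_sup hX_sup k x hx
  rwa [hX t ht, add_zero]

end AddSubgroup

def zeroSumSubgroup (ι M : Type*) [Fintype ι] [AddCommGroup M] : AddSubgroup (ι → M) where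
  carrier := {a | ∑ i, a i = 0}
  zero_mem' := by simp
  add_mem' := by simp_all [Finset.sum_add_distrib]
  neg_mem' := by simp_all

theorem mem_zeroSumSubgroup {ι M : Type*} [Fintype ι] [AddCommGroup M] {a : ι → M} :
    a ∈ zeroSumSubgroup ι M ↔ ∑ i, a i = 0 :=
  Iff.rfl

section sigmaMap

variable {p m q : ℕ}

theorem sigmaMap_apply (a : Fin (m * p) → ZMod q) (j : Fin m) :
    sigmaMap p m q a j = ∑ t : Fin p, a (finProdFinEquiv (j, t)) := by
  refine Finset.sum_congr rfl fun t _ => congrArg a (Fin.ext ?_)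
  simp [add_comm]

theorem sum_sigmaMap (a : Fin (m * p) → ZMod q) :
    ∑ j, sigmaMap p m q a j = ∑ i, a i := by
  simp only [sigmaMap_apply]
  rw [← Fintype.sum_prod_type', Equiv.sum_comp finProdFinEquiv a]

theorem sigmaMap_surjective (hp : 0 < p) : Function.Surjective (sigmaMap p m q) := by
  intro s
  refine ⟨fun i => (Pi.single (⟨0, hp⟩ : Fin p) (s (finProdFinEquiv.symm i).1) : Fin p → ZMod q)
    (finProdFinEquiv.symm i).2, funext fun j => ?_⟩
  simp only [sigmaMap_apply, Equiv.symm_apply_apply]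
  simp

variable (p m q) in
def sigmaHom : (Fin (m * p) → ZMod q) →+ (Fin m → ZMod q) :=
  AddMonoidHom.mk' (sigmaMap p m q) fun a b => funext fun j => by
    simp [sigmaMap_apply, Finset.sum_add_distrib]

theorem comap_sigmaHom_zeroSumSubgroup :
    (zeroSumSubgroup (Fin m) (ZMod q)).comap (sigmaHom p m q) =
      zeroSumSubgroup (Fin (m * p)) (ZMod q) := by
  ext a
  simp only [AddSubgroup.mem_comap, mem_zeroSumSubgroup, sigmaHom, AddMonoidHom.mk'_apply,
    sum_sigmaMap]

theorem map_sigmaHom_zeroSumSubgroup (hp : 0 < p) :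
    (zeroSumSubgroup (Fin (m * p)) (ZMod q)).map (sigmaHom p m q) =
      zeroSumSubgroup (Fin m) (ZMod q) := by
  rw [← comap_sigmaHom_zeroSumSubgroup]
  exact AddSubgroup.map_comap_eq_self_of_surjective (sigmaMap_surjective hp) _

end sigmaMap

theorem stmt_8_general (p e q m : ℕ) (hp : p.Prime) (hq : q = p ^ e)
    (Λ : Set (Fin (m * p) → ZMod q))
    (hΛgen : (AddSubgroup.closure Λ : Set (Fin (m * p) → ZMod q)) =
      {a : Fin (m * p) → ZMod q | ∑ i, a i = 0}) :
    (AddSubgroup.closure ((sigmaMap p m q '' Λ) \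
        {s : Fin m → ZMod q | ∃ t : Fin m → ZMod q, (∑ j, t j = 0) ∧ s = p • t}) :
      Set (Fin m → ZMod q)) = {s : Fin m → ZMod q | ∑ j, s j = 0} := by
  have hΛ : AddSubgroup.closure Λ = zeroSumSubgroup (Fin (m * p)) (ZMod q) :=
    SetLike.coe_injective hΛgen
  have himage : AddSubgroup.closure (sigmaMap p m q '' Λ) = zeroSumSubgroup (Fin m) (ZMod q) := by
    rw [show sigmaMap p m q = sigmaHom p m q from rfl, ← AddMonoidHom.map_closure, hΛ,
      map_sigmaHom_zeroSumSubgroup hp.pos]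
  have hexponent : ∀ s ∈ zeroSumSubgroup (Fin m) (ZMod q), p ^ e • s = 0 := fun s _ =>
    funext fun j => by simp [← hq]
  exact congrArg SetLike.coe
    (AddSubgroup.closure_diff_nsmul_eq_of_closure_eq himage hexponent)

/-- Let `p` be a prime, `q = p^e` (`e ≥ 1`), `m ≥ 1` and `n = m·p`.
If `Λ ⊆ X_n(q) = {a : ∑ aᵢ = 0}` generates `X_n(q)` as an abelian group, then the
set `Σ(Λ) \ p·X_m(q)` generates `X_m(q)` as an abelian group. -/
theorem stmt_8 (p e q m : ℕ) (hp : p.Prime) (he : 1 ≤ e) (hq : q = p ^ e)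
    (hm : 0 < m)
    (Λ : Set (Fin (m * p) → ZMod q))
    (hΛsub : ∀ a ∈ Λ, ∑ i, a i = 0)
    (hΛgen : (AddSubgroup.closure Λ : Set (Fin (m * p) → ZMod q)) =
      {a : Fin (m * p) → ZMod q | ∑ i, a i = 0}) :
    (AddSubgroup.closure ((sigmaMap p m q '' Λ) \
        {s : Fin m → ZMod q | ∃ t : Fin m → ZMod q, (∑ j, t j = 0) ∧ s = p • t}) :
      Set (Fin m → ZMod q)) = {s : Fin m → ZMod q | ∑ j, s j = 0} :=
  stmt_8_general p e q m hp hq Λ hΛgen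
end
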